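/- The derivative of SiLU, α'(x) = σ(x)(1 + x(1 − σ(x))) where σ is the sigmoid, is bounded in absolute value by 1.1 for all real x. -/

import Mathlib

lemma exp_24_ge : (11 : ℝ) ≤ Real.exp 2.4 := by
  have h1 : (2.7182818283 : ℝ) < Real.exp 1 := Real.exp_one_gt_d9
  have h2 : (1.105 : ℝ) ≤ Real.exp 0.1 := by
    have := Real.quadratic_le_exp_of_nonneg (x := 0.1) (by norm_num)
    nlinarith
  have h3 : Real.exp 2.4 = Real.exp 1 * Real.exp 1 * (Real.exp 0.1)^4 := by
    rw [show (2.4:ℝ) = 1 + 1 + (0.1 + 0.1 + (0.1 + 0.1)) by norm_num]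
    rw [Real.exp_add, Real.exp_add, Real.exp_add, Real.exp_add]
    ring
  have hb : (1.49:ℝ) ≤ (Real.exp 0.1)^4 := by
    have := pow_le_pow_left₀ (by norm_num : (0:ℝ) ≤ 1.105) h2 4
    nlinarith
  have ha : (7.389:ℝ) ≤ Real.exp 1 * Real.exp 1 := by nlinarith
  rw [h3]
  nlinarith [Real.exp_pos 0.1, Real.exp_pos 1, pow_pos (Real.exp_pos 0.1) 4]

/-- The derivative of SiLU, σ(x)(1 + x(1 − σ(x))) with σ the sigmoid, is bounded
in absolute value by 1.1. -/
theorem silu_deriv_bound (x : ℝ) :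
    |(1 / (1 + Real.exp (-x))) * (1 + x * (1 - 1 / (1 + Real.exp (-x))))| ≤ 1.1 := by
  set t := Real.exp (-x) with ht
  have htpos : 0 < t := Real.exp_pos _
  have h1t : 0 < 1 + t := by linarith
  -- key upper bound: x * t ≤ exp(-2.4) + 1.4 * t
  have key1 : (x - 1.4) * t ≤ Real.exp (-2.4) := by
    have h := Real.add_one_le_exp (x - 2.4)
    have : (x - 1.4) * t ≤ Real.exp (x - 2.4) * t := by
      nlinarith
    calc (x - 1.4) * t ≤ Real.exp (x - 2.4) * t := this
      _ = Real.exp (-2.4) := by rw [ht, ← Real.exp_add]; ring_nf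
  have hexp : Real.exp (-2.4) ≤ 1/11 := by
    rw [Real.exp_neg]
    rw [inv_le_comm₀ (Real.exp_pos _) (by norm_num)]
    simpa using exp_24_ge
  have keyU : x * t ≤ 0.1 + 1.2 * t + 1.1 * t^2 := by
    have sq : 0 ≤ 1.1 * (t - 1/11)^2 := by positivity
    nlinarith [key1, hexp]
  -- key lower bound: -x*t ≤ (t-1)*t
  have keyL : (1 - x) * t ≤ t * t := by
    have h := Real.add_one_le_exp (-x)
    nlinarith
  -- rewrite expression
  have hexpr : (1 / (1 + t)) * (1 + x * (1 - 1 / (1 + t))) = (1 + t + x * t) / (1 + t)^2 := by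
    field_simp
    ring_nf
  rw [hexpr, abs_div, abs_of_pos (by positivity : (0:ℝ) < (1+t)^2)]
  rw [div_le_iff₀ (by positivity)]
  rw [abs_le]
  constructor
  · rw [neg_le]
    nlinarith [keyL]
  · nlinarith [keyU]
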